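/- arXiv:1204.5216 — 6 statements merged into one kernel-verified Lean document; each statement's English description precedes it below -/
import Mathlib

section
/- Let A be a noncommutative prime ring of characteristic not 2 and let M be an ideal of A that is contained in every nonzero ideal of A and M ≠ 0. Then the additive subgroup [M, A] generated by all commutators [m, a] with m ∈ M, a ∈ A is not contained in the center Z(A). -/
/-- If M is the unique minimal ideal of a noncommutative prime ring of characteristic
not 2, then [M,A] is not contained in the center. -/
theorem stmt_3 {A : Type*} [Ring A]
    (hprime : ∀ a b : A, (∀ x : A, a * x * b = 0) → a = 0 ∨ b = 0)
    (hchar : ∀ a : A, a + a = 0 → a = 0)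
    (hnc : ∃ x y : A, x * y ≠ y * x)
    (M : TwoSidedIdeal A) (hM : M ≠ ⊥)
    (hmin : ∀ I : TwoSidedIdeal A, I ≠ ⊥ → M ≤ I) :
    ¬ (∀ m ∈ M, ∀ a x : A, (m * a - a * m) * x = x * (m * a - a * m)) := by
  intro h
  -- Step 1: every commutator [m, a] with m ∈ M vanishes.
  have key : ∀ m ∈ M, ∀ a : A, m * a - a * m = 0 := by
    intro m hm a
    set z := m * a - a * m with hz
    have hzc : ∀ x, z * x = x * z := h m hm a
    have hmz : ∀ x, (m * z) * x = x * (m * z) := by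
      intro x
      have e : m * (m * a) - (m * a) * m = m * z := by rw [hz]; noncomm_ring
      have := h m hm (m * a) x
      rw [e] at this
      exact this
    have h1 : ∀ x : A, (m * x - x * m) * z = 0 := by
      intro x
      have e : m * x * z = x * (m * z) := by
        rw [mul_assoc m x z, ← hzc x, ← mul_assoc, hmz x]
      calc (m * x - x * m) * z = m * x * z - x * (m * z) := by noncomm_ring
        _ = 0 := by rw [e]; noncomm_ring
    have zz : z * z = 0 := by
      have := h1 a
      rwa [← hz] at this
    have hz0 : ∀ y : A, z * y * z = 0 := by
      intro y
      rw [mul_assoc, ← hzc y, ← mul_assoc, zz, zero_mul]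
    rcases hprime z z hz0 with h0 | h0 <;> exact h0
  -- Step 2: M annihilates all commutators.
  have key2 : ∀ m ∈ M, ∀ a x : A, m * (a * x - x * a) = 0 := by
    intro m hm a x
    have h2 := key m hm x
    have h3 := key (m * a) (M.mul_mem_right m a hm) x
    calc m * (a * x - x * a)
        = ((m * a) * x - x * (m * a)) - (m * x - x * m) * a := by noncomm_ring
      _ = 0 := by rw [h3, h2, zero_mul, sub_zero]
  -- Step 3: pick a nonzero element of M.
  obtain ⟨m0, hm0, hne⟩ : ∃ m ∈ M, m ≠ 0 := by
    by_contra h'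
    push_neg at h'
    apply hM
    ext x
    simp only [TwoSidedIdeal.mem_bot]
    exact ⟨fun hx => h' x hx, fun hx => hx ▸ M.zero_mem⟩
  obtain ⟨a, x, hax⟩ := hnc
  have hall : ∀ y : A, m0 * y * (a * x - x * a) = 0 := by
    intro y
    have := key2 (m0 * y) (M.mul_mem_right m0 y hm0) a x
    exact this
  rcases hprime m0 (a * x - x * a) hall with h0 | h0
  · exact hne h0
  · exact hax (sub_eq_zero.mp h0)
end

section
/- Let F be a field of characteristic 0 and A a finite-dimensional central simple F-algebra. Then A = [A, A] ⊕ F·1 as F-vector spaces, where [A, A] is the linear span of commutators. -/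
/-!
Let `τ` be the trace of the left regular representation. Then `τ (x * y) = τ (y * x)` and
`τ 1 = dim A ≠ 0`, so the span `K` of commutators lies in the hyperplane `ker τ`, which is
complementary to `F·1`. For the reverse inclusion consider the trace form `(x, y) ↦ τ (x * y)`:
its radical is a two-sided ideal not containing `1`, hence zero since `A` is simple, and the
identity `τ ((a * b - b * a) * y) = τ (a * (b * y - y * b))` shows that
`K^⊥` consists of central elements, i.e. `K^⊥ ≤ F·1`.
Taking orthogonals again, `ker τ = (F·1)^⊥ ≤ K^⊥⊥ = K`.
-/

open LinearMap (BilinForm)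

theorem isCompl_ker_span_singleton {F V : Type*} [Field F] [AddCommGroup V] [Module F V]
    [FiniteDimensional F V] {f : V →ₗ[F] F} {v : V} (hv : f v ≠ 0) :
    IsCompl (LinearMap.ker f) (F ∙ v) := by
  have hv0 : v ≠ 0 := fun h => hv (by simp [h])
  exact Module.Dual.isCompl_ker_of_disjoint_of_ne_bot (fun h => hv (by simp [h]))
    ((Submodule.disjoint_span_singleton' hv0).2 hv) (by simpa using hv0)

section Tracial

variable {F A : Type*} [Field F] [Ring A] [Algebra F A]

variable (F A) in
def commutatorSpan : Submodule F A :=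
  Submodule.span F {u : A | ∃ v w : A, u = v * w - w * v}

def traceForm (τ : A →ₗ[F] F) : BilinForm F A := (LinearMap.mul F A).compr₂ τ

theorem traceForm_apply (τ : A →ₗ[F] F) (x y : A) : traceForm τ x y = τ (x * y) := rfl

theorem traceForm_orthogonal_span_one (τ : A →ₗ[F] F) :
    (traceForm τ).orthogonal (F ∙ (1 : A)) = LinearMap.ker τ := by
  ext m
  simp only [BilinForm.mem_orthogonal_iff, Submodule.mem_span_singleton, LinearMap.mem_ker]
  refine ⟨fun h => by simpa [traceForm_apply] using h 1 ⟨1, one_smul F 1⟩, ?_⟩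
  rintro h _ ⟨c, rfl⟩
  simp [traceForm_apply, h]

def IsTracial (τ : A →ₗ[F] F) : Prop := ∀ x y : A, τ (x * y) = τ (y * x)

namespace IsTracial

variable {τ : A →ₗ[F] F}

theorem commutatorSpan_le_ker (hτ : IsTracial τ) :
    commutatorSpan F A ≤ LinearMap.ker τ := by
  rw [commutatorSpan, Submodule.span_le]
  rintro _ ⟨v, w, rfl⟩
  simp [hτ v w]

theorem traceForm_isRefl (hτ : IsTracial τ) : (traceForm τ).IsRefl :=
  fun x y h => by rwa [traceForm_apply, hτ] at h

def radical (hτ : IsTracial τ) : TwoSidedIdeal A :=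
  TwoSidedIdeal.mk' {m : A | ∀ n, τ (m * n) = 0}
    (by simp)
    (fun hx hy n => by rw [add_mul, map_add, hx n, hy n, add_zero])
    (fun hx n => by rw [neg_mul, map_neg, hx n, neg_zero])
    (fun {x y} hy n => by rw [mul_assoc, hτ, mul_assoc]; exact hy (n * x))
    (fun {x y} hx n => by rw [mul_assoc]; exact hx (y * n))

theorem mem_radical (hτ : IsTracial τ) {m : A} :
    m ∈ hτ.radical ↔ ∀ n, τ (m * n) = 0 :=
  TwoSidedIdeal.mem_mk' _ _ _ _ _ _ m

theorem radical_eq_bot [IsSimpleRing A] (hτ : IsTracial τ)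
    (h1 : τ 1 ≠ 0) : hτ.radical = ⊥ := by
  refine (eq_bot_or_eq_top hτ.radical).resolve_right fun htop => h1 ?_
  have h1mem : (1 : A) ∈ hτ.radical := htop ▸ TwoSidedIdeal.mem_top _
  simpa using hτ.mem_radical.1 h1mem 1

theorem traceForm_nondegenerate [IsSimpleRing A] (hτ : IsTracial τ)
    (h1 : τ 1 ≠ 0) : (traceForm τ).Nondegenerate := by
  refine hτ.traceForm_isRefl.nondegenerate_iff_separatingLeft.2 fun m hm => ?_
  have : m ∈ hτ.radical := hτ.mem_radical.2 hm
  rwa [hτ.radical_eq_bot h1, TwoSidedIdeal.mem_bot] at this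

theorem orthogonal_commutatorSpan_le_center (hτ : IsTracial τ)
    (hB : (traceForm τ).SeparatingRight) :
    (traceForm τ).orthogonal (commutatorSpan F A) ≤
      Subalgebra.toSubmodule (Subalgebra.center F A) := by
  intro y hy
  refine (Subalgebra.mem_center_iff (R := F)).2 fun b => sub_eq_zero.1 (hB _ fun a => ?_)
  have hab : τ ((a * b - b * a) * y) = 0 := hy _ (Submodule.subset_span ⟨a, b, rfl⟩)
  calc traceForm τ a (b * y - y * b) = τ ((a * b - b * a) * y) := by
        rw [traceForm_apply, mul_sub, sub_mul, map_sub, map_sub, ← mul_assoc a y b, hτ (a * y) b,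
          ← mul_assoc, ← mul_assoc]
    _ = 0 := hab

variable [FiniteDimensional F A]

theorem ker_eq_commutatorSpan [IsSimpleRing A] (hτ : IsTracial τ)
    (h1 : τ 1 ≠ 0) (hcentral : Subalgebra.center F A = ⊥) :
    LinearMap.ker τ = commutatorSpan F A := by
  have hB := hτ.traceForm_nondegenerate h1
  refine le_antisymm ?_ hτ.commutatorSpan_le_ker
  calc LinearMap.ker τ = (traceForm τ).orthogonal (F ∙ (1 : A)) :=
        (traceForm_orthogonal_span_one τ).symm
    _ ≤ (traceForm τ).orthogonal ((traceForm τ).orthogonal (commutatorSpan F A)) := by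
        refine BilinForm.orthogonal_le ?_
        simpa [hcentral, Algebra.toSubmodule_bot, Submodule.one_eq_span]
          using hτ.orthogonal_commutatorSpan_le_center hB.2
    _ = commutatorSpan F A := BilinForm.orthogonal_orthogonal hB hτ.traceForm_isRefl _

end IsTracial

end Tracial

section RegularTrace

variable (F A : Type*) [Field F] [Ring A] [Algebra F A]

noncomputable def regularTrace : A →ₗ[F] F :=
  (LinearMap.trace F A).comp (Algebra.lmul F A).toLinearMap

theorem isTracial_regularTrace : IsTracial (regularTrace F A) := fun x y => by
  simp only [regularTrace, LinearMap.comp_apply, AlgHom.toLinearMap_apply, map_mul,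
    LinearMap.trace_mul_comm]

theorem regularTrace_one [FiniteDimensional F A] : regularTrace F A 1 = Module.finrank F A := by
  rw [regularTrace, LinearMap.comp_apply, AlgHom.toLinearMap_apply, map_one, LinearMap.trace_one]

end RegularTrace

/-- A finite-dimensional central simple algebra over a field of characteristic 0
decomposes as [A,A] ⊕ F·1. -/
theorem stmt_7 (F : Type*) [Field F] [CharZero F]
    (A : Type*) [Ring A] [Algebra F A] [FiniteDimensional F A]
    (hsimple : IsSimpleOrder (TwoSidedIdeal A))
    (hcentral : Subalgebra.center F A = ⊥) :
    IsCompl (Submodule.span F {u : A | ∃ v w : A, u = v * w - w * v})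
      (Submodule.span F {(1 : A)}) := by
  have : IsSimpleRing A := ⟨hsimple⟩
  have h1 : regularTrace F A 1 ≠ 0 := by
    rw [regularTrace_one]
    exact_mod_cast Module.finrank_pos.ne'
  rw [← commutatorSpan, ← (isTracial_regularTrace F A).ker_eq_commutatorSpan h1 hcentral]
  exact isCompl_ker_span_singleton h1
end

section
/- Let F be an algebraically closed field, n ≥ 1, and e, f ∈ M_n(F). If the linear map h : M_n(F) → M_n(F) defined by h(x) = ex + xf is nonzero, then its rank (dimension of its image) is at least n. -/
/-!
On a rank-one matrix, `h (v wᵀ) = (e v) wᵀ + v (fᵀ w)ᵀ`. If some `v` is not an eigenvector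
of `e`, then `v` and `e v` are independent and this vanishes only for `w = 0`, so
`w ↦ h (v wᵀ)` embeds `Fⁿ` into the range of `h`; likewise with the roles of `e` and `fᵀ`
swapped. Otherwise `e = a • 1` and `f = b • 1`, and `h = (a + b) • id` is invertible.
-/

open Matrix Module

theorem LinearMap.finrank_le_finrank_range_of_injective_comp {K V M N : Type*} [Field K]
    [AddCommGroup V] [Module K V] [AddCommGroup M] [Module K M] [AddCommGroup N] [Module K N]
    [FiniteDimensional K N] (h : M →ₗ[K] N) (θ : V →ₗ[K] M) (hθ : Function.Injective (h ∘ₗ θ)) :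
    finrank K V ≤ finrank K (LinearMap.range h) :=
  (LinearMap.finrank_range_of_inj hθ).symm.le.trans
    (Submodule.finrank_mono (LinearMap.range_comp_le_range θ h))

namespace Matrix

variable {K ι : Type*} [Field K]

theorem eq_zero_of_vecMulVec_add_vecMulVec_eq_zero {m : Type*} {a b : m → K} {u w : ι → K}
    (hab : LinearIndependent K ![a, b]) (h : vecMulVec a u + vecMulVec b w = 0) :
    u = 0 ∧ w = 0 := by
  have hcol : ∀ j, u j • a + w j • b = 0 := fun j => by
    ext i
    simpa [vecMulVec_apply, mul_comm] using congrFun (congrFun h i) j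
  exact ⟨funext fun j => (LinearIndependent.pair_iff.mp hab _ _ (hcol j)).1,
    funext fun j => (LinearIndependent.pair_iff.mp hab _ _ (hcol j)).2⟩

theorem exists_eq_smul_one_of_forall_not_linearIndependent [Fintype ι] [DecidableEq ι]
    {M : Matrix ι ι K} (hM : ∀ v, ¬LinearIndependent K ![v, M *ᵥ v]) : ∃ a : K, M = a • 1 := by
  obtain ⟨a, ha⟩ := (toLin' M).exists_eq_smul_id_of_forall_notLinearIndependent hM
  refine ⟨a, ?_⟩
  simpa using congrArg LinearMap.toMatrix' ha

theorem mulLeft_add_mulRight_vecMulVec [Fintype ι] (e f : Matrix ι ι K) (v w : ι → K) :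
    (LinearMap.mulLeft K e + LinearMap.mulRight K f) (vecMulVec v w) =
      vecMulVec (e *ᵥ v) w + vecMulVec v (w ᵥ* f) := by
  simp [mul_vecMulVec, vecMulVec_mul]

theorem card_le_finrank_range_mulLeft_add_mulRight_of_linearIndependent_mulVec [Fintype ι]
    {e : Matrix ι ι K} (f : Matrix ι ι K) {v : ι → K} (hv : LinearIndependent K ![v, e *ᵥ v]) :
    Fintype.card ι ≤
      finrank K (LinearMap.range (LinearMap.mulLeft K e + LinearMap.mulRight K f)) := by
  simpa using (LinearMap.mulLeft K e + LinearMap.mulRight K f)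
    |>.finrank_le_finrank_range_of_injective_comp (vecMulVecBilin K K v) <| by
    rw [← LinearMap.ker_eq_bot, LinearMap.ker_eq_bot']
    intro w hw
    rw [LinearMap.comp_apply, vecMulVecBilin_apply_apply, mulLeft_add_mulRight_vecMulVec,
      add_comm] at hw
    exact (eq_zero_of_vecMulVec_add_vecMulVec_eq_zero hv hw).2

theorem card_le_finrank_range_mulLeft_add_mulRight_of_linearIndependent_vecMul [Fintype ι]
    (e : Matrix ι ι K) {f : Matrix ι ι K} {w : ι → K} (hw : LinearIndependent K ![w, w ᵥ* f]) :
    Fintype.card ι ≤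
      finrank K (LinearMap.range (LinearMap.mulLeft K e + LinearMap.mulRight K f)) := by
  simpa using (LinearMap.mulLeft K e + LinearMap.mulRight K f)
    |>.finrank_le_finrank_range_of_injective_comp ((vecMulVecBilin K K).flip w) <| by
    rw [← LinearMap.ker_eq_bot, LinearMap.ker_eq_bot']
    intro v hv
    rw [LinearMap.comp_apply, LinearMap.flip_apply, vecMulVecBilin_apply_apply,
      mulLeft_add_mulRight_vecMulVec] at hv
    have hvT := congrArg transpose hv
    simp only [transpose_add, transpose_vecMulVec, transpose_zero] at hvT
    exact (eq_zero_of_vecMulVec_add_vecMulVec_eq_zero hw hvT).2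

theorem mulLeft_smul_one_add_mulRight_smul_one [Fintype ι] [DecidableEq ι] (a b : K) :
    LinearMap.mulLeft K (a • 1 : Matrix ι ι K) + LinearMap.mulRight K (b • 1) =
      (a + b) • LinearMap.id := by
  ext1 x
  simp [add_smul]

theorem card_le_finrank_range_smul_id [Fintype ι] {c : K} (hc : c ≠ 0) :
    Fintype.card ι ≤ finrank K (LinearMap.range (c • LinearMap.id : Matrix ι ι K →ₗ[K] _)) := by
  rw [LinearMap.finrank_range_of_inj (smul_right_injective _ hc), finrank_matrix, finrank_self,
    mul_one]
  exact Nat.le_mul_self _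

end Matrix

theorem stmt_8_general (F : Type*) [Field F] (n : ℕ)
    (e f : Matrix (Fin n) (Fin n) F)
    (h : Matrix (Fin n) (Fin n) F →ₗ[F] Matrix (Fin n) (Fin n) F)
    (hh : h = LinearMap.mulLeft F e + LinearMap.mulRight F f)
    (hne : h ≠ 0) :
    n ≤ Module.finrank F (LinearMap.range h) := by
  subst hh
  suffices Fintype.card (Fin n) ≤ finrank F (LinearMap.range _) by simpa using this
  by_cases he : ∃ v, LinearIndependent F ![v, e *ᵥ v]
  · obtain ⟨v, hv⟩ := he
    exact card_le_finrank_range_mulLeft_add_mulRight_of_linearIndependent_mulVec f hv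
  by_cases hf : ∃ w, LinearIndependent F ![w, fᵀ *ᵥ w]
  · obtain ⟨w, hw⟩ := hf
    rw [mulVec_transpose] at hw
    exact card_le_finrank_range_mulLeft_add_mulRight_of_linearIndependent_vecMul e hw
  simp only [not_exists] at he hf
  obtain ⟨a, rfl⟩ := exists_eq_smul_one_of_forall_not_linearIndependent he
  obtain ⟨b, hb⟩ := exists_eq_smul_one_of_forall_not_linearIndependent hf
  rw [← transpose_transpose f, hb, transpose_smul, transpose_one,
    mulLeft_smul_one_add_mulRight_smul_one] at hne ⊢
  exact card_le_finrank_range_smul_id (left_ne_zero_of_smul hne)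

/-- Over an algebraically closed field, if h(x) = ex + xf is a nonzero operator on
M_n(F), then its rank is at least n. -/
theorem stmt_8 (F : Type*) [Field F] [IsAlgClosed F] (n : ℕ) (hn : 1 ≤ n)
    (e f : Matrix (Fin n) (Fin n) F)
    (h : Matrix (Fin n) (Fin n) F →ₗ[F] Matrix (Fin n) (Fin n) F)
    (hh : h = LinearMap.mulLeft F e + LinearMap.mulRight F f)
    (hne : h ≠ 0) :
    n ≤ Module.finrank F (LinearMap.range h) :=
  stmt_8_general F n e f h hh hne
end

section
/- Let F be a field of characteristic 0, n ≥ 2, and λ, μ ∈ F. For a trace-zero matrix a ∈ M_n(F) define w_a : M_n(F) → M_n(F) by w_a(x) = ax + xa + λ·tr(x)·a + μ·tr(xa)·1. Then for all trace-zero a, b and all x ∈ M_n(F): [w_a, w_b](x) = [[a,b], x] + (nλμ + 2λ + 2μ)(tr(xb)·a - tr(xa)·b). -/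
/-- The commutator formula for the operators w_a(x) = ax + xa + λ tr(x) a + μ tr(xa) 1. -/
theorem stmt_9 (F : Type*) [Field F] [CharZero F] (n : ℕ) (hn : 2 ≤ n)
    (lam mu : F)
    (w : Matrix (Fin n) (Fin n) F → Matrix (Fin n) (Fin n) F → Matrix (Fin n) (Fin n) F)
    (hw : ∀ a x, w a x = a * x + x * a + (lam * Matrix.trace x) • a
      + (mu * Matrix.trace (x * a)) • (1 : Matrix (Fin n) (Fin n) F))
    (a b : Matrix (Fin n) (Fin n) F)
    (ha : Matrix.trace a = 0) (hb : Matrix.trace b = 0)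
    (x : Matrix (Fin n) (Fin n) F) :
    w a (w b x) - w b (w a x)
      = ((a * b - b * a) * x - x * (a * b - b * a))
        + ((n : F) * lam * mu + 2 * lam + 2 * mu)
            • (Matrix.trace (x * b) • a - Matrix.trace (x * a) • b) := by
  have htrab : Matrix.trace (x * a * b) = Matrix.trace (b * x * a) := by
    rw [Matrix.trace_mul_comm, mul_assoc]
  have htrba : Matrix.trace (x * b * a) = Matrix.trace (a * x * b) := by
    rw [Matrix.trace_mul_comm, mul_assoc]
  simp only [hw, mul_add, add_mul, smul_mul_assoc, mul_smul_comm, one_mul, mul_one,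
    Matrix.trace_add, Matrix.trace_smul, Matrix.trace_one, Matrix.trace_mul_comm x a,
    Matrix.trace_mul_comm x b, ha, hb, smul_smul, sub_mul, mul_sub, smul_sub, smul_add,
    Finset.card_fin, mul_assoc]
  simp only [← Matrix.trace_mul_comm x a, ← Matrix.trace_mul_comm x b, htrab, htrba,
    smul_zero, zero_smul, add_zero, zero_add, mul_zero, zero_mul]
  have e1 : (b*(x*a)).trace = (x*(a*b)).trace := by
    rw [Matrix.trace_mul_comm, mul_assoc]
  have e2 : (a*(x*b)).trace = (x*(b*a)).trace := by
    rw [Matrix.trace_mul_comm, mul_assoc]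
  have e3 : (b*a).trace = (a*b).trace := Matrix.trace_mul_comm b a
  simp only [e1, e2, e3, Fintype.card_fin, smul_eq_mul]
  module
end

section
/- Let F be a field of characteristic 0, n ≥ 2, and λ ∈ F with λ ≠ -2/n. Set μ = -2λ/(nλ + 2). Then the set g + W(λ), where g = {ad c : c ∈ M_n(F)} and W(λ) = {x ↦ ax + xa + λ tr(x)a + μ tr(xa)1 : a ∈ M_n(F), tr(a) = 0}, is a Lie subalgebra of End_F(M_n(F)). -/
/-!
Write `W a x = a x + x a + λ tr(x) a + μ tr(x a) 1`. Since `ad c` is a derivation of the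
associative product and kills traces of commutators, `[ad c, W a] = W [c, a]`, and `[c, a]` is
traceless. For traceless `a`, `b`, expanding `[W a, W b] x` leaves `[a, b] x - x [a, b]` plus
`(μ (nλ + 2) + 2λ) (tr(x b) a - tr(x a) b)`, and the coefficient vanishes for `μ = -2λ/(nλ + 2)`.
Hence `𝔤 + W(λ)` is closed under brackets.
-/

namespace Matrix

attribute [local instance] LieRing.ofAssociativeRing

open LieAlgebra

variable {F : Type*} [Field F] {n : Type*} [Fintype n] [DecidableEq n]

/-- `W(λ)` of the paper is the image of the traceless matrices under `jordanTraceOp lam mu`. -/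
def jordanTraceOp (lam mu : F) : Matrix n n F →ₗ[F] Module.End F (Matrix n n F) :=
  LinearMap.mk₂ F (fun a x => a * x + x * a + (lam * trace x) • a + (mu * trace (x * a)) • 1)
    (fun a b x => by simp only [add_mul, mul_add, trace_add, smul_add, add_smul]; abel)
    (fun r a x => by simp only [smul_mul, Matrix.mul_smul, trace_smul, smul_eq_mul]; module)
    (fun a x y => by simp only [add_mul, mul_add, trace_add, add_smul]; abel)
    (fun r a x => by simp only [smul_mul, Matrix.mul_smul, trace_smul, smul_eq_mul]; module)

@[simp]
lemma jordanTraceOp_apply (lam mu : F) (a x : Matrix n n F) :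
    jordanTraceOp lam mu a x = a * x + x * a + (lam * trace x) • a + (mu * trace (x * a)) • 1 :=
  rfl

variable {lam mu : F} {a b : Matrix n n F}

lemma lie_ad_jordanTraceOp (c : Matrix n n F) :
    ⁅ad F _ c, jordanTraceOp lam mu a⁆ = jordanTraceOp lam mu ⁅c, a⁆ := by
  ext x : 1
  have hcx : trace (c * x - x * c) = 0 := by rw [trace_sub, trace_mul_comm, sub_self]
  have hcxa : trace ((c * x - x * c) * a) = - trace (x * (c * a - a * c)) := by
    simp only [sub_mul, mul_sub, trace_sub, mul_assoc, trace_mul_comm c (x * a)]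
    ring
  simp only [LieRing.of_associative_ring_bracket, LinearMap.sub_apply, Module.End.mul_apply,
    ad_apply, jordanTraceOp_apply, hcx, hcxa]
  simp only [mul_add, add_mul, mul_sub, sub_mul, Matrix.mul_smul, Matrix.smul_mul, mul_one,
    one_mul, mul_assoc]
  module

lemma lie_jordanTraceOp_ad (c : Matrix n n F) :
    ⁅jordanTraceOp lam mu a, ad F _ c⁆ = -jordanTraceOp lam mu ⁅c, a⁆ := by
  rw [← lie_skew, lie_ad_jordanTraceOp]

lemma trace_jordanTraceOp_apply (hb : trace b = 0) (x : Matrix n n F) :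
    trace (jordanTraceOp lam mu b x) = (2 + Fintype.card n * mu) * trace (x * b) := by
  simp only [jordanTraceOp_apply, trace_add, trace_smul, hb, trace_one, trace_mul_comm b x,
    smul_eq_mul]
  ring

lemma trace_jordanTraceOp_apply_mul (ha : trace a = 0) (x : Matrix n n F) :
    trace (jordanTraceOp lam mu b x * a) =
      trace (x * (a * b)) + trace (x * (b * a)) + lam * trace x * trace (a * b) := by
  simp only [jordanTraceOp_apply, add_mul, trace_add, smul_mul, one_mul, trace_smul, ha,
    smul_eq_mul, trace_mul_comm b (x * a), trace_mul_comm b a, mul_assoc]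
  ring

lemma lie_jordanTraceOp (hmu : mu * (Fintype.card n * lam + 2) + 2 * lam = 0)
    (ha : trace a = 0) (hb : trace b = 0) :
    ⁅jordanTraceOp lam mu a, jordanTraceOp lam mu b⁆ = ad F _ ⁅a, b⁆ := by
  ext x : 1
  simp only [LieRing.of_associative_ring_bracket, LinearMap.sub_apply, Module.End.mul_apply,
    ad_apply]
  rw [jordanTraceOp_apply lam mu a (jordanTraceOp lam mu b x),
    jordanTraceOp_apply lam mu b (jordanTraceOp lam mu a x), trace_jordanTraceOp_apply ha,
    trace_jordanTraceOp_apply hb, trace_jordanTraceOp_apply_mul ha,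
    trace_jordanTraceOp_apply_mul hb, trace_mul_comm b a]
  simp only [jordanTraceOp_apply, mul_add, add_mul, Matrix.mul_smul, Matrix.smul_mul, mul_one,
    one_mul, mul_assoc, mul_sub, sub_mul]
  linear_combination (norm := module) hmu • (trace (x * b) • a - trace (x * a) • b)

variable (lam mu) in
/-- The paper's `𝔤 + W(λ)`, with `μ` left free. -/
def adJordanTraceSubmodule : Submodule F (Module.End F (Matrix n n F)) :=
  LinearMap.range (ad F (Matrix n n F)).toLinearMap ⊔
    (SpecialLinear.sl n F).toSubmodule.map (jordanTraceOp lam mu)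

lemma mem_adJordanTraceSubmodule {d : Module.End F (Matrix n n F)} :
    d ∈ adJordanTraceSubmodule lam mu ↔ ∃ c a : Matrix n n F, trace a = 0 ∧
      ∀ x, d x = (c * x - x * c) + (a * x + x * a + (lam * trace x) • a
        + (mu * trace (x * a)) • (1 : Matrix n n F)) := by
  rw [adJordanTraceSubmodule, Submodule.mem_sup]
  constructor
  · rintro ⟨_, ⟨c, rfl⟩, _, ⟨a, ha, rfl⟩, rfl⟩
    exact ⟨c, a, ha, fun x => rfl⟩
  · rintro ⟨c, a, ha, hd⟩
    exact ⟨_, ⟨c, rfl⟩, _, ⟨a, ha, rfl⟩, LinearMap.ext fun x => (hd x).symm⟩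

lemma lie_mem_adJordanTraceSubmodule (hmu : mu * (Fintype.card n * lam + 2) + 2 * lam = 0)
    {d₁ d₂ : Module.End F (Matrix n n F)} (hd₁ : d₁ ∈ adJordanTraceSubmodule lam mu)
    (hd₂ : d₂ ∈ adJordanTraceSubmodule lam mu) : ⁅d₁, d₂⁆ ∈ adJordanTraceSubmodule lam mu := by
  obtain ⟨_, ⟨c₁, rfl⟩, _, ⟨a₁, ha₁, rfl⟩, rfl⟩ := Submodule.mem_sup.mp hd₁
  obtain ⟨_, ⟨c₂, rfl⟩, _, ⟨a₂, ha₂, rfl⟩, rfl⟩ := Submodule.mem_sup.mp hd₂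
  have h_ad (c : Matrix n n F) : ad F _ c ∈ adJordanTraceSubmodule lam mu :=
    Submodule.mem_sup_left (LinearMap.mem_range_self _ c)
  have h_W (c a : Matrix n n F) : jordanTraceOp lam mu ⁅c, a⁆ ∈ adJordanTraceSubmodule lam mu :=
    Submodule.mem_sup_right (Submodule.mem_map_of_mem (matrix_trace_commutator_zero n F c a))
  rw [LieHom.coe_toLinearMap, lie_add, add_lie, add_lie, ← LieHom.map_lie, lie_ad_jordanTraceOp,
    lie_jordanTraceOp_ad, lie_jordanTraceOp hmu ha₁ ha₂]
  exact add_mem (add_mem (h_ad _) (neg_mem (h_W _ _))) (add_mem (h_W _ _) (h_ad _))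

end Matrix

lemma mul_add_two_mul_eq_zero_of_eq_div {F : Type*} [Field F] {k lam mu : F}
    (hlam : lam ≠ -2 / k) (hmu : mu = -2 * lam / (k * lam + 2)) :
    mu * (k * lam + 2) + 2 * lam = 0 := by
  -- if `k λ + 2 = 0` then `k = 0` (else `λ = -2/k`), so `2 = 0` and the junk value `μ = 0` works
  by_cases hden : k * lam + 2 = 0
  · by_cases hk : k = 0
    · have h2 : (2 : F) = 0 := by rwa [hk, zero_mul, zero_add] at hden
      simp [hk, h2]
    · exact absurd (by field_simp; linear_combination hden) hlam
  · rw [hmu, div_mul_cancel₀ _ hden]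
    ring

theorem stmt_10_general (F : Type*) [Field F] (n : ℕ)
    (lam : F) (hlam : lam ≠ -2 / (n : F))
    (mu : F) (hmu : mu = -2 * lam / ((n : F) * lam + 2))
    (S : Set (Matrix (Fin n) (Fin n) F →ₗ[F] Matrix (Fin n) (Fin n) F))
    (hS : S = {d | ∃ c a : Matrix (Fin n) (Fin n) F, Matrix.trace a = 0 ∧
      ∀ x, d x = (c * x - x * c) + (a * x + x * a + (lam * Matrix.trace x) • a
        + (mu * Matrix.trace (x * a)) • (1 : Matrix (Fin n) (Fin n) F))}) :
    (∀ d₁ ∈ S, ∀ d₂ ∈ S, d₁ + d₂ ∈ S) ∧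
    (∀ c : F, ∀ d ∈ S, c • d ∈ S) ∧
    (∀ d₁ ∈ S, ∀ d₂ ∈ S, d₁ ∘ₗ d₂ - d₂ ∘ₗ d₁ ∈ S) := by
  have hrel : mu * (Fintype.card (Fin n) * lam + 2) + 2 * lam = 0 := by
    rw [Fintype.card_fin]
    exact mul_add_two_mul_eq_zero_of_eq_div hlam hmu
  have hSL : S = ↑(Matrix.adJordanTraceSubmodule (n := Fin n) lam mu) := by
    ext d
    rw [hS]
    exact Matrix.mem_adJordanTraceSubmodule.symm
  subst hSL
  exact ⟨fun _ h₁ _ h₂ => add_mem h₁ h₂, fun c _ h => Submodule.smul_mem _ c h,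
    fun _ h₁ _ h₂ => Matrix.lie_mem_adJordanTraceSubmodule hrel h₁ h₂⟩

/-- For λ ≠ -2/n and μ = -2λ/(nλ+2), the set g + W(λ) is a Lie subalgebra of
End_F(M_n(F)): it is closed under addition, scalar multiplication, and the
commutator bracket. -/
theorem stmt_10 (F : Type*) [Field F] [CharZero F] (n : ℕ) (hn : 2 ≤ n)
    (lam : F) (hlam : lam ≠ -2 / (n : F))
    (mu : F) (hmu : mu = -2 * lam / ((n : F) * lam + 2))
    (S : Set (Matrix (Fin n) (Fin n) F →ₗ[F] Matrix (Fin n) (Fin n) F))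
    (hS : S = {d | ∃ c a : Matrix (Fin n) (Fin n) F, Matrix.trace a = 0 ∧
      ∀ x, d x = (c * x - x * c) + (a * x + x * a + (lam * Matrix.trace x) • a
        + (mu * Matrix.trace (x * a)) • (1 : Matrix (Fin n) (Fin n) F))}) :
    (∀ d₁ ∈ S, ∀ d₂ ∈ S, d₁ + d₂ ∈ S) ∧
    (∀ c : F, ∀ d ∈ S, c • d ∈ S) ∧
    (∀ d₁ ∈ S, ∀ d₂ ∈ S, d₁ ∘ₗ d₂ - d₂ ∘ₗ d₁ ∈ S) :=
  stmt_10_general F n lam hlam mu hmu S hS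
end

section
/- Let F be a field of characteristic 0 and n ≥ 2. The element x = e_{11} - e_{22} + i(e_{33} - e_{44}) in M_n(F) (n ≥ 4, i a square root of -1 in F) satisfies e_{12}x + xe_{12} + λ tr(x) e_{12} + μ tr(x e_{12})·1 = 0 for all λ, μ ∈ F, but w(x²) ≠ 0 where w(y) = e_{12}y + ye_{12} + λ tr(y)e_{12} + μ tr(y e_{12})·1, provided λ ≠ -2/n and μ = -2λ/(nλ+2). That is, x ∈ ker(w) but x² ∉ ker(w), so ker(w) is not a subalgebra. -/
/-! For a diagonal matrix `D` and `a ≠ b`, the matrix `e_ab D + D e_ab` is `(D_aa + D_bb) e_ab`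
and `tr (D e_ab) = 0`, so `w(D) = (D_aa + D_bb + λ tr D) e_ab`. Both `x = diag(1, -1, i, -i, 0, …)`
and `x² = diag(1, 1, -1, -1, 0, …)` are traceless, but the first has `D₁₁ + D₂₂ = 0` and the
second `D₁₁ + D₂₂ = 2`. -/

open Matrix

theorem OrthogonalIdempotents.sum_smul_mul_sum_smul {R A I : Type*} [CommSemiring R]
    [Semiring A] [Algebra R A] [Fintype I] {e : I → A} (he : OrthogonalIdempotents e)
    (c c' : I → R) :
    (∑ k, c k • e k) * (∑ k, c' k • e k) = ∑ k, (c k * c' k) • e k := by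
  classical
  simp only [Finset.sum_mul_sum, smul_mul_smul_comm, he.mul_eq]
  refine Finset.sum_congr rfl fun k _ => ?_
  rw [Finset.sum_eq_single k] <;> simp +contextual [eq_comm]

section SumSmulSingle

variable {R ι κ : Type*} [CommRing R] [DecidableEq ι] [Fintype κ]

theorem Pi.sum_smul_single_one_apply {j : κ → ι} (hj : j.Injective) (c : κ → R) (k : κ) :
    (∑ l, c l • Pi.single (j l) (1 : R)) (j k) = c k := by
  rw [Finset.sum_apply, Finset.sum_eq_single k] <;> simp +contextual [hj.eq_iff]

theorem Matrix.diagonal_sum_smul_single_one (j : κ → ι) (c : κ → R) :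
    diagonal (∑ l, c l • Pi.single (j l) (1 : R)) = ∑ l, c l • single (j l) (j l) (1 : R) := by
  change diagonalLinearMap ι R R _ = _
  simp only [map_sum, map_smul]
  exact Finset.sum_congr rfl fun l _ => congrArg _ (diagonal_single _ _)

variable [Fintype ι]

omit [Fintype κ] in
theorem Pi.orthogonalIdempotents_single_one_comp {j : κ → ι} (hj : j.Injective) :
    OrthogonalIdempotents fun k => (Pi.single (j k) 1 : ι → R) :=
  (CompleteOrthogonalIdempotents.single fun _ => R).1.embedding ⟨j, hj⟩

theorem Pi.sum_sum_smul_single_one (j : κ → ι) (c : κ → R) :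
    ∑ m, (∑ l, c l • Pi.single (j l) (1 : R)) m = ∑ l, c l := by
  simp only [Finset.sum_apply]
  rw [Finset.sum_comm]
  simp [← Finset.mul_sum]

end SumSmulSingle

namespace Matrix

variable {R ι : Type*} [CommRing R] [Fintype ι] [DecidableEq ι]

def traceTwistedAnticommutator (a : Matrix ι ι R) (lam mu : R) (y : Matrix ι ι R) :
    Matrix ι ι R :=
  a * y + y * a + (lam * trace y) • a + (mu * trace (y * a)) • 1

theorem single_one_mul_diagonal (a b : ι) (d : ι → R) :
    single a b 1 * diagonal d = single a b (d b) := by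
  ext k l
  by_cases h : a = k ∧ b = l
  · obtain ⟨rfl, rfl⟩ := h; simp [mul_diagonal]
  · simp [mul_diagonal, h]

theorem diagonal_mul_single_one (a b : ι) (d : ι → R) :
    diagonal d * single a b 1 = single a b (d a) := by
  ext k l
  by_cases h : a = k ∧ b = l
  · obtain ⟨rfl, rfl⟩ := h; simp
  · simp [diagonal_mul, h]

theorem traceTwistedAnticommutator_single_one_diagonal {a b : ι} (hab : a ≠ b)
    (lam mu : R) (d : ι → R) :
    traceTwistedAnticommutator (single a b 1) lam mu (diagonal d)
      = (d a + d b + lam * ∑ k, d k) • single a b 1 := by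
  rw [traceTwistedAnticommutator, single_one_mul_diagonal, diagonal_mul_single_one,
    trace_single_eq_of_ne a b _ hab, trace_diagonal, smul_single, smul_single]
  simp [← single_add, add_comm]

end Matrix

/-- For x = e₁₁ - e₂₂ + i(e₃₃ - e₄₄) (i² = -1, n ≥ 4) and
w(y) = e₁₂y + ye₁₂ + λ tr(y) e₁₂ + μ tr(y e₁₂) 1 (λ ≠ -2/n, μ = -2λ/(nλ+2)),
we have w(x) = 0 for all λ, μ, but w(x²) ≠ 0; so ker(w) is not a subalgebra. -/
theorem stmt_18 (F : Type*) [Field F] [CharZero F] (n : ℕ) (hn : 4 ≤ n)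
    (i : F) (hi : i ^ 2 = -1)
    (lam : F)
    (mu : F)
    (e : Fin n → Fin n → Matrix (Fin n) (Fin n) F)
    (he : ∀ j k, e j k = Matrix.single j k (1 : F))
    (x : Matrix (Fin n) (Fin n) F)
    (hx : x = e ⟨0, by omega⟩ ⟨0, by omega⟩ - e ⟨1, by omega⟩ ⟨1, by omega⟩
      + i • (e ⟨2, by omega⟩ ⟨2, by omega⟩ - e ⟨3, by omega⟩ ⟨3, by omega⟩))
    (w : F → F → Matrix (Fin n) (Fin n) F → Matrix (Fin n) (Fin n) F)
    (hw : ∀ lam' mu' y, w lam' mu' y =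
      e ⟨0, by omega⟩ ⟨1, by omega⟩ * y + y * e ⟨0, by omega⟩ ⟨1, by omega⟩
      + (lam' * Matrix.trace y) • e ⟨0, by omega⟩ ⟨1, by omega⟩
      + (mu' * Matrix.trace (y * e ⟨0, by omega⟩ ⟨1, by omega⟩))
          • (1 : Matrix (Fin n) (Fin n) F)) :
    (∀ lam' mu' : F, w lam' mu' x = 0) ∧ w lam mu (x * x) ≠ 0 := by
  set j : Fin 4 → Fin n := Fin.castLE hn
  have hj : j.Injective := Fin.castLE_injective hn
  set c : Fin 4 → F := ![1, -1, i, -i]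
  have hx_diag : x = diagonal (∑ k, c k • Pi.single (j k) 1) := by
    rw [hx, diagonal_sum_smul_single_one, Fin.sum_univ_four]
    simp [he, c, j, sub_eq_add_neg, add_assoc]
    rfl
  have hxx_diag : x * x = diagonal (∑ k, (c k * c k) • Pi.single (j k) 1) := by
    rw [hx_diag, diagonal_mul_diagonal,
      ← (Pi.orthogonalIdempotents_single_one_comp hj).sum_smul_mul_sum_smul]
    rfl
  have hw_diag : ∀ lam' mu' (v : Fin 4 → F), w lam' mu' (diagonal (∑ k, v k • Pi.single (j k) 1))
      = (v 0 + v 1 + lam' * ∑ k, v k) • single (j 0) (j 1) 1 := by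
    intro lam' mu' v
    rw [← Pi.sum_smul_single_one_apply hj v 0, ← Pi.sum_smul_single_one_apply hj v 1,
      ← Pi.sum_sum_smul_single_one j v, ← traceTwistedAnticommutator_single_one_diagonal
        (hj.ne (by decide)) _ mu', hw, he]
    rfl
  have hc : ∑ k, c k = 0 := by simp [c, Fin.sum_univ_four]
  have hc_sq : ∑ k, c k * c k = 0 := by
    simp [c, Fin.sum_univ_four, cons_val_three, ← sq, hi]
  refine ⟨fun lam' mu' => ?_, ?_⟩
  · rw [hx_diag, hw_diag, hc]
    simp [c]
  · rw [hxx_diag, hw_diag, hc_sq]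
    intro h
    have h01 := congrFun (congrFun h (j 0)) (j 1)
    norm_num [c] at h01
end
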